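/- Vitali–Porter theorem: Let D ⊆ ℂ be open and connected, and let (f_L) be a sequence of holomorphic functions on D with |f_L(z)| ≤ M for all L and all z ∈ D. Suppose there is a subset D' ⊆ D with an accumulation point in D such that lim_{L→∞} f_L(z) exists for each z ∈ D'. Then (f_L) converges uniformly on every compact subset of D to a holomorphic function f_∞. -/

import Mathlib

/-!
The differences `f L - f K` are uniformly bounded holomorphic functions. Near a point `c` at
which the points of convergence accumulate, Cauchy's estimates show by induction on `n` that the
`n`-th Taylor coefficient of `f L - f K` at `c` tends to `0`: it is read off from the value at a
point `w` of convergence close to `c`, up to the lower coefficients and an error `O(|w - c|)`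
that is uniform in `L, K`. Geometric decay of the coefficients then gives uniform convergence on
the disc of half the radius. So the set of accumulation points of the convergence set is
relatively open in `D`; being closed and containing `z₀`, it contains the connected set `D`, and
the convergence is locally uniform on `D`, with a holomorphic limit.
-/

open Filter Topology Metric Set

lemma IsPreconnected.subset_derivedSet_of_mem_nhds {X : Type*} [TopologicalSpace X] [T1Space X]
    [PerfectSpace X] {D Z : Set X} (hD : IsPreconnected D) (h₀ : (D ∩ derivedSet Z).Nonempty)
    (hZ : ∀ x ∈ D ∩ derivedSet Z, Z ∈ 𝓝 x) :
    D ⊆ derivedSet Z := by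
  have hint : interior Z ⊆ derivedSet Z := by
    have := preperfect_iff_subset_derivedSet.1
      (PerfectSpace.univ_preperfect.open_inter (isOpen_interior (s := Z)))
    rw [inter_univ] at this
    exact this.trans (derivedSet_mono _ _ interior_subset)
  have hcl : closure (interior Z) ⊆ derivedSet Z :=
    (isClosed_derivedSet Z).closure_subset_iff.2 hint
  refine Subset.trans ?_ hint
  refine hD.subset_of_closure_inter_subset isOpen_interior ?_ ?_
  · obtain ⟨x, hx⟩ := h₀
    exact ⟨x, hx.1, mem_interior_iff_mem_nhds.2 (hZ x hx)⟩
  · rintro x ⟨hx, hxD⟩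
    exact mem_interior_iff_mem_nhds.2 (hZ x ⟨hxD, hcl hx⟩)

section UniformLimits

variable {ι α E : Type*} {l : Filter ι}

lemma tendstoLocallyUniformlyOn_limUnder [TopologicalSpace α] [UniformSpace E] [CompleteSpace E]
    [Nonempty E] [l.NeBot] {F : ι → α → E} {s : Set α}
    (h : ∀ x ∈ s, ∃ t ∈ 𝓝[s] x, UniformCauchySeqOn F l t) :
    TendstoLocallyUniformlyOn F (fun x => limUnder l (F · x)) l s := by
  refine tendstoLocallyUniformlyOn_of_forall_exists_nhds fun x hx => ?_
  obtain ⟨t, ht, hF⟩ := h x hx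
  refine ⟨t, ht, hF.tendstoUniformlyOn_of_tendsto fun y hy => ?_⟩
  exact tendsto_nhds_limUnder (cauchy_map_iff_exists_tendsto.1 (hF.cauchy_map hy))

variable [SeminormedAddCommGroup E]

lemma UniformCauchySeqOn.of_tendstoUniformlyOn_sub {F : ι → α → E} {s : Set α}
    (h : TendstoUniformlyOn (fun m : ι × ι => F m.1 - F m.2) 0 (l ×ˢ l) s) :
    UniformCauchySeqOn F l s := by
  intro u hu
  obtain ⟨ε, hε, hεu⟩ := Metric.mem_uniformity_dist.1 hu
  filter_upwards [Metric.tendstoUniformlyOn_iff.1 h ε hε] with m hm x hx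
  apply hεu
  simpa [dist_eq_norm, norm_sub_rev] using hm x hx

lemma tendstoUniformlyOn_zero_of_norm_le_add {F : ι → α → E} {s : Set α}
    (h : ∀ ε > 0, ∃ u : ι → ℝ, Tendsto u l (𝓝 0) ∧ ∀ᶠ i in l, ∀ x ∈ s, ‖F i x‖ ≤ u i + ε) :
    TendstoUniformlyOn F 0 l s := by
  refine Metric.tendstoUniformlyOn_iff.2 fun ε hε => ?_
  obtain ⟨u, hu, hFu⟩ := h (ε / 2) (half_pos hε)
  filter_upwards [hFu, hu.eventually (gt_mem_nhds (half_pos hε))] with i hi hui x hx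
  rw [Pi.zero_apply, dist_zero_left]
  linarith [hi x hx]

lemma tendsto_zero_of_norm_le_add {a : ι → E}
    (h : ∀ ε > 0, ∃ u : ι → ℝ, Tendsto u l (𝓝 0) ∧ ∀ᶠ i in l, ‖a i‖ ≤ u i + ε) :
    Tendsto a l (𝓝 0) := by
  refine (tendstoUniformlyOn_singleton_iff_tendsto (F := fun i (_ : Unit) => a i) (x := ())).1
    (tendstoUniformlyOn_zero_of_norm_le_add fun ε hε => ?_)
  obtain ⟨u, hu, hau⟩ := h ε hε
  exact ⟨u, hu, hau.mono fun i hi _ _ => hi⟩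

end UniformLimits

namespace Complex

open Nat Finset

variable {E : Type*} [NormedAddCommGroup E] [NormedSpace ℂ E] [CompleteSpace E]

noncomputable def taylorCoeff (f : ℂ → E) (c : ℂ) (n : ℕ) : E := (n ! : ℂ)⁻¹ • iteratedDeriv n f c

variable {f : ℂ → E} {c z : ℂ} {R C : ℝ}

lemma norm_taylorCoeff_le (hR : 0 < R) (hf : DiffContOnCl ℂ f (ball c R))
    (hC : ∀ w ∈ sphere c R, ‖f w‖ ≤ C) (n : ℕ) : ‖taylorCoeff f c n‖ ≤ C / R ^ n := by
  have hn : (0 : ℝ) < n ! := mod_cast n.factorial_pos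
  rw [taylorCoeff, norm_smul, norm_inv, norm_natCast, inv_mul_le_iff₀ hn, ← mul_div_assoc]
  exact norm_iteratedDeriv_le_of_forall_mem_sphere_norm_le n hR hf hC

lemma norm_sub_sum_taylorCoeff_le (hR : 0 < R) (hf : DiffContOnCl ℂ f (ball c R))
    (hC : ∀ w ∈ sphere c R, ‖f w‖ ≤ C) (hz : z ∈ closedBall c (R / 2)) (n : ℕ) :
    ‖f z - ∑ m ∈ range n, (z - c) ^ m • taylorCoeff f c m‖ ≤ 2 * C * (‖z - c‖ / R) ^ n := by
  set q := ‖z - c‖ / R with hq_def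
  have hC0 : 0 ≤ C := by
    obtain ⟨w, hw⟩ := (NormedSpace.sphere_nonempty (x := c)).2 hR.le
    exact (norm_nonneg _).trans (hC w hw)
  have hq0 : 0 ≤ q := by positivity
  have hq : q ≤ 1 / 2 := by
    rw [div_le_iff₀ hR]
    linarith [mem_closedBall_iff_norm.1 hz]
  have hsum : HasSum (fun m => (z - c) ^ m • taylorCoeff f c m) (f z) := by
    simpa only [taylorCoeff, smul_comm ((_ : ℂ) ^ _)] using
      hasSum_taylorSeries_on_ball hf.differentiableOn
        (closedBall_subset_ball (half_lt_self hR) hz)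
  have htail := (hasSum_nat_add_iff' n).2 hsum
  have hgeom : HasSum (fun j => C * q ^ n * q ^ j) (C * q ^ n * (1 - q)⁻¹) :=
    (hasSum_geometric_of_lt_one hq0 (by linarith)).mul_left _
  refine (htail.norm_le_of_bounded hgeom fun j => ?_).trans ?_
  · rw [norm_smul, norm_pow, mul_comm]
    calc ‖taylorCoeff f c (j + n)‖ * ‖z - c‖ ^ (j + n)
        ≤ C / R ^ (j + n) * ‖z - c‖ ^ (j + n) := by
          gcongr; exact norm_taylorCoeff_le hR hf hC _
      _ = C * q ^ n * q ^ j := by rw [hq_def, div_pow, div_pow]; field_simp; ring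
  · have : (1 - q)⁻¹ ≤ 2 := by rw [inv_le_comm₀ (by linarith) two_pos]; linarith
    calc C * q ^ n * (1 - q)⁻¹ ≤ C * q ^ n * 2 := by gcongr
      _ = 2 * C * q ^ n := by ring

lemma norm_le_sum_taylorCoeff_add (hR : 0 < R) (hf : DiffContOnCl ℂ f (ball c R))
    (hC : ∀ w ∈ sphere c R, ‖f w‖ ≤ C) (hz : z ∈ closedBall c (R / 2)) (n : ℕ) :
    ‖f z‖ ≤ ∑ m ∈ range n, ‖taylorCoeff f c m‖ * ‖z - c‖ ^ m + 2 * C * (‖z - c‖ / R) ^ n := by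
  calc ‖f z‖ ≤ ‖∑ m ∈ range n, (z - c) ^ m • taylorCoeff f c m‖
        + ‖f z - ∑ m ∈ range n, (z - c) ^ m • taylorCoeff f c m‖ := norm_le_norm_add_norm_sub' _ _
    _ ≤ _ := by
      gcongr
      · refine (norm_sum_le _ _).trans_eq (sum_congr rfl fun m _ => ?_)
        rw [norm_smul, norm_pow, mul_comm]
      · exact norm_sub_sum_taylorCoeff_le hR hf hC hz n

lemma norm_taylorCoeff_mul_pow_le (hR : 0 < R) (hf : DiffContOnCl ℂ f (ball c R))
    (hC : ∀ w ∈ sphere c R, ‖f w‖ ≤ C) (hz : z ∈ closedBall c (R / 2)) (n : ℕ) :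
    ‖taylorCoeff f c n‖ * ‖z - c‖ ^ n ≤
      ‖f z‖ + ∑ m ∈ range n, ‖taylorCoeff f c m‖ * ‖z - c‖ ^ m
        + 2 * C * (‖z - c‖ / R) ^ (n + 1) := by
  set S := fun k => ∑ m ∈ range k, (z - c) ^ m • taylorCoeff f c m
  have hsplit : (z - c) ^ n • taylorCoeff f c n = (f z - S n) - (f z - S (n + 1)) := by
    simp only [S, sum_range_succ]; abel
  calc ‖taylorCoeff f c n‖ * ‖z - c‖ ^ n = ‖(f z - S n) - (f z - S (n + 1))‖ := by
        rw [← hsplit, norm_smul, norm_pow, mul_comm]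
    _ ≤ ‖f z‖ + ‖S n‖ + ‖f z - S (n + 1)‖ :=
        (norm_sub_le _ _).trans (by gcongr; exact norm_sub_le _ _)
    _ ≤ _ := by
      gcongr
      · refine (norm_sum_le _ _).trans_eq (sum_congr rfl fun m _ => ?_)
        rw [norm_smul, norm_pow, mul_comm]
      · exact norm_sub_sum_taylorCoeff_le hR hf hC hz (n + 1)

section Family

variable {ι : Type*} {l : Filter ι} {h : ι → ℂ → E}

lemma tendsto_taylorCoeff_of_accPt (hR : 0 < R) (hh : ∀ i, DiffContOnCl ℂ (h i) (ball c R))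
    (hC : ∀ i, ∀ w ∈ sphere c R, ‖h i w‖ ≤ C)
    (hc : AccPt c (𝓟 {w | Tendsto (h · w) l (𝓝 0)})) (n : ℕ) :
    Tendsto (fun i => taylorCoeff (h i) c n) l (𝓝 0) := by
  induction n using Nat.strong_induction_on with
  | _ n ih =>
  refine tendsto_zero_of_norm_le_add fun ε hε => ?_
  have hsmall : ∀ᶠ w in 𝓝 c,
      w ∈ closedBall c (R / 2) ∧ 2 * C * ‖w - c‖ / R ^ (n + 1) ≤ ε := by
    have hlim : Tendsto (fun w => 2 * C * ‖w - c‖ / R ^ (n + 1)) (𝓝 c) (𝓝 0) := by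
      simpa using (((continuous_id.sub (continuous_const (y := c))).norm.const_mul
        (2 * C)).div_const (R ^ (n + 1))).tendsto c
    filter_upwards [closedBall_mem_nhds c (half_pos hR), hlim.eventually (ge_mem_nhds hε)]
      with w hwB hwε using ⟨hwB, hwε⟩
  obtain ⟨w, ⟨hwc, hwZ⟩, hwB, hwε⟩ := ((accPt_iff_frequently.1 hc).and_eventually hsmall).exists
  set t := ‖w - c‖
  have ht : 0 < t ^ n := pow_pos (norm_pos_iff.2 (sub_ne_zero.2 hwc)) n
  refine ⟨fun i => (‖h i w‖ + ∑ m ∈ range n, ‖taylorCoeff (h i) c m‖ * t ^ m) / t ^ n, ?_,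
    .of_forall fun i => ?_⟩
  · simpa using (hwZ.norm.add (tendsto_finsetSum _ fun m hm =>
      (ih m (mem_range.1 hm)).norm.mul_const (t ^ m))).div_const (t ^ n)
  have hrem : 2 * C * (t / R) ^ (n + 1) = 2 * C * t / R ^ (n + 1) * t ^ n := by
    rw [div_pow, pow_succ]; field_simp
  rw [div_add' _ _ _ ht.ne', le_div_iff₀ ht]
  calc ‖taylorCoeff (h i) c n‖ * t ^ n
      ≤ ‖h i w‖ + ∑ m ∈ range n, ‖taylorCoeff (h i) c m‖ * t ^ m
        + 2 * C * (t / R) ^ (n + 1) := norm_taylorCoeff_mul_pow_le hR (hh i) (hC i) hwB n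
    _ ≤ ‖h i w‖ + ∑ m ∈ range n, ‖taylorCoeff (h i) c m‖ * t ^ m + ε * t ^ n := by
      rw [hrem]; gcongr

lemma tendstoUniformlyOn_closedBall_of_tendsto_taylorCoeff (hR : 0 < R)
    (hh : ∀ i, DiffContOnCl ℂ (h i) (ball c R)) (hC : ∀ i, ∀ w ∈ sphere c R, ‖h i w‖ ≤ C)
    (hcoeff : ∀ n, Tendsto (fun i => taylorCoeff (h i) c n) l (𝓝 0)) :
    TendstoUniformlyOn h 0 l (closedBall c (R / 2)) := by
  refine tendstoUniformlyOn_zero_of_norm_le_add fun ε hε => ?_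
  have hgeom : Tendsto (fun n : ℕ => 2 * C * (1 / 2 : ℝ) ^ n) atTop (𝓝 0) := by
    simpa using (tendsto_pow_atTop_nhds_zero_of_lt_one (by norm_num : (0 : ℝ) ≤ 1 / 2)
      (by norm_num)).const_mul (2 * C)
  obtain ⟨n, hn⟩ := (hgeom.eventually (ge_mem_nhds hε)).exists
  refine ⟨fun i => ∑ m ∈ range n, ‖taylorCoeff (h i) c m‖ * (R / 2) ^ m, ?_,
    .of_forall fun i z hz => ?_⟩
  · simpa using tendsto_finsetSum _ fun m _ => (hcoeff m).norm.mul_const ((R / 2) ^ m)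
  have hzc : ‖z - c‖ ≤ R / 2 := mem_closedBall_iff_norm.1 hz
  have hC0 : 0 ≤ C := by
    obtain ⟨w, hw⟩ := (NormedSpace.sphere_nonempty (x := c)).2 hR.le
    exact (norm_nonneg _).trans (hC i w hw)
  refine (norm_le_sum_taylorCoeff_add hR (hh i) (hC i) hz n).trans (add_le_add ?_ ?_)
  · exact sum_le_sum fun m _ => by gcongr
  · calc 2 * C * (‖z - c‖ / R) ^ n ≤ 2 * C * (1 / 2) ^ n := by
          gcongr 2 * C * ?_ ^ n; rw [div_le_iff₀ hR]; linarith
      _ ≤ ε := hn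

lemma tendstoUniformlyOn_closedBall_of_accPt (hR : 0 < R)
    (hh : ∀ i, DiffContOnCl ℂ (h i) (ball c R)) (hC : ∀ i, ∀ w ∈ sphere c R, ‖h i w‖ ≤ C)
    (hc : AccPt c (𝓟 {w | Tendsto (h · w) l (𝓝 0)})) :
    TendstoUniformlyOn h 0 l (closedBall c (R / 2)) :=
  tendstoUniformlyOn_closedBall_of_tendsto_taylorCoeff hR hh hC
    (tendsto_taylorCoeff_of_accPt hR hh hC hc)

end Family

end Complex

theorem vitali_porter_general (D : Set ℂ) (hD : IsOpen D) (hconn : IsConnected D)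
    (f : ℕ → ℂ → ℂ) (M : ℝ)
    (hholo : ∀ L, DifferentiableOn ℂ (f L) D)
    (hbound : ∀ L, ∀ z ∈ D, ‖f L z‖ ≤ M)
    (D' : Set ℂ)
    (z₀ : ℂ) (hz₀D : z₀ ∈ D) (hacc : AccPt z₀ (𝓟 D'))
    (hconv : ∀ z ∈ D', ∃ w : ℂ, Tendsto (fun L => f L z) atTop (𝓝 w)) :
    ∃ finf : ℂ → ℂ, DifferentiableOn ℂ finf D ∧
      ∀ K : Set ℂ, IsCompact K → K ⊆ D →
        TendstoUniformlyOn f finf atTop K := by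
  set Z := {w | Tendsto (fun m : ℕ × ℕ => f m.1 w - f m.2 w) (atTop ×ˢ atTop) (𝓝 0)}
  have hD'Z : D' ⊆ Z := fun w hw => by
    obtain ⟨a, ha⟩ := hconv w hw
    simpa [Z] using (ha.comp tendsto_fst).sub (ha.comp tendsto_snd)
  have hloc : ∀ z ∈ D, z ∈ derivedSet Z → ∃ r > 0,
      TendstoUniformlyOn (fun m : ℕ × ℕ => f m.1 - f m.2) 0 (atTop ×ˢ atTop) (closedBall z r) := by
    intro z hz hzZ
    obtain ⟨R, hR, hRD⟩ := nhds_basis_closedBall.mem_iff.1 (hD.mem_nhds hz)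
    have hsphere : sphere z R ⊆ D := sphere_subset_closedBall.trans hRD
    exact ⟨R / 2, half_pos hR, Complex.tendstoUniformlyOn_closedBall_of_accPt hR
      (fun m => ((hholo m.1).sub (hholo m.2)).diffContOnCl_ball hRD)
      (fun m w hw => (norm_sub_le _ _).trans
        (add_le_add (hbound _ _ (hsphere hw)) (hbound _ _ (hsphere hw)))) hzZ⟩
  have hDZ : D ⊆ derivedSet Z := by
    refine hconn.isPreconnected.subset_derivedSet_of_mem_nhds
      ⟨z₀, hz₀D, hacc.mono (principal_mono.2 hD'Z)⟩ fun z hz => ?_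
    obtain ⟨r, hr, hunif⟩ := hloc z hz.1 hz.2
    exact mem_of_superset (closedBall_mem_nhds z hr) fun w hw => by
      simpa [Z] using hunif.tendsto_at hw
  have hlim : TendstoLocallyUniformlyOn f (fun z => limUnder atTop (f · z)) atTop D := by
    refine tendstoLocallyUniformlyOn_limUnder fun z hz => ?_
    obtain ⟨r, hr, hunif⟩ := hloc z hz (hDZ hz)
    exact ⟨closedBall z r, mem_nhdsWithin_of_mem_nhds (closedBall_mem_nhds z hr),
      .of_tendstoUniformlyOn_sub hunif⟩
  exact ⟨_, hlim.differentiableOn (.of_forall hholo) hD, fun K hK hKD =>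
    (tendstoLocallyUniformlyOn_iff_forall_isCompact hD).1 hlim K hKD hK⟩

/-- Vitali–Porter theorem -/
theorem vitali_porter (D : Set ℂ) (hD : IsOpen D) (hconn : IsConnected D)
    (f : ℕ → ℂ → ℂ) (M : ℝ)
    (hholo : ∀ L, DifferentiableOn ℂ (f L) D)
    (hbound : ∀ L, ∀ z ∈ D, ‖f L z‖ ≤ M)
    (D' : Set ℂ) (hD' : D' ⊆ D)
    (z₀ : ℂ) (hz₀D : z₀ ∈ D) (hacc : AccPt z₀ (𝓟 D'))
    (hconv : ∀ z ∈ D', ∃ w : ℂ, Tendsto (fun L => f L z) atTop (𝓝 w)) :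
    ∃ finf : ℂ → ℂ, DifferentiableOn ℂ finf D ∧
      ∀ K : Set ℂ, IsCompact K → K ⊆ D →
        TendstoUniformlyOn f finf atTop K :=
  vitali_porter_general D hD hconn f M hholo hbound D' z₀ hz₀D hacc hconv
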